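/- Let Z ∈ ℝ^{n×s} with s ≥ n, let z_x ∈ ℝ^s be a feature vector depending on x with E_x[z_x z_xᵀ] = (1/s) Wᵀ Σ W for a covariance Σ, and let ε ∈ ℝ^n be a noise vector with E[εεᵀ] ⪯ σ² I. Let Σ̂ be such that (1/n)ZᵀZ = (1/s) Wᵀ Σ̂ W. Then the variance term V = E_x E_ε ‖z_xᵀ (ZᵀZ)† Zᵀ ε‖² satisfies V ≤ (σ²/n) Tr(Wᵀ Σ W (Wᵀ Σ̂ W)†). -/

import Mathlib

open MeasureTheory Matrix

lemma pinv_unique {k : Type*} [Fintype k] [DecidableEq k] {M P Q : Matrix k k ℝ}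
    (hP1 : M * P * M = M) (hP2 : P * M * P = P) (hP3 : (M*P)ᵀ = M*P) (hP4 : (P*M)ᵀ = P*M)
    (hQ1 : M * Q * M = M) (hQ2 : Q * M * Q = Q) (hQ3 : (M*Q)ᵀ = M*Q) (hQ4 : (Q*M)ᵀ = Q*M) :
    P = Q := by
  have hMP : M * P = M * Q := by
    calc M * P = M*Q*M*P := by rw [hQ1]
      _ = (M*Q) * (M*P) := by rw [Matrix.mul_assoc]
      _ = (M*Q)ᵀ * (M*P)ᵀ := by rw [hQ3, hP3]
      _ = ((M*P)*(M*Q))ᵀ := (Matrix.transpose_mul _ _).symm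
      _ = ((M*P*M)*Q)ᵀ := by rw [Matrix.mul_assoc (M*P)]
      _ = (M*Q)ᵀ := by rw [hP1]
      _ = M*Q := hQ3
  have hPM : P * M = Q * M := by
    calc P*M = P*(M*Q*M) := by rw [hQ1]
      _ = (P*M)*(Q*M) := by simp only [Matrix.mul_assoc]
      _ = (P*M)ᵀ*(Q*M)ᵀ := by rw [hP4, hQ4]
      _ = ((Q*M)*(P*M))ᵀ := (Matrix.transpose_mul _ _).symm
      _ = (Q*(M*P*M))ᵀ := by simp only [Matrix.mul_assoc]
      _ = (Q*M)ᵀ := by rw [hP1]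
      _ = Q*M := hQ4
  calc P = P*M*P := hP2.symm
    _ = P*(M*Q) := by rw [Matrix.mul_assoc, hMP]
    _ = (Q*M)*Q := by rw [← Matrix.mul_assoc, hPM]
    _ = Q := hQ2

lemma trace_mul_psd_nonneg {k : Type*} [Fintype k] [DecidableEq k] {M N : Matrix k k ℝ}
    (hM : M.PosSemidef) (hN : N.PosSemidef) : 0 ≤ (M*N).trace := by
  obtain ⟨B, rfl⟩ : ∃ B : Matrix k k ℝ, M = Bᴴ * B := by
    open scoped MatrixOrder in
    exact CStarAlgebra.nonneg_iff_eq_star_mul_self.mp hM.nonneg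
  obtain ⟨D, rfl⟩ : ∃ D : Matrix k k ℝ, N = Dᴴ * D := by
    open scoped MatrixOrder in
    exact CStarAlgebra.nonneg_iff_eq_star_mul_self.mp hN.nonneg
  have h1 : Bᴴ * B * (Dᴴ * D) = Bᴴ * (B * Dᴴ * D) := by simp only [Matrix.mul_assoc]
  rw [h1, Matrix.trace_mul_comm, Matrix.mul_assoc, Matrix.mul_assoc]
  have h2 : B * (Dᴴ * (D * Bᴴ)) = (B*Dᴴ) * (B*Dᴴ)ᴴ := by
    simp only [Matrix.conjTranspose_mul, Matrix.conjTranspose_conjTranspose, Matrix.mul_assoc]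
  rw [h2, Matrix.trace]
  refine Finset.sum_nonneg fun i _ => ?_
  simp only [Matrix.diag_apply, Matrix.mul_apply, Matrix.conjTranspose_apply, star_trivial]
  exact Finset.sum_nonneg fun j _ => mul_self_nonneg _

lemma pinv_smul {k : Type*} [Fintype k] [DecidableEq k] {B Q : Matrix k k ℝ} {c : ℝ} (hc : c ≠ 0)
    (hQ1 : B*Q*B = B) (hQ2 : Q*B*Q = Q) (hQ3 : (B*Q)ᵀ = B*Q) (hQ4 : (Q*B)ᵀ = Q*B) :
    (c•B) * (c⁻¹•Q) * (c•B) = c•B ∧ (c⁻¹•Q)*(c•B)*(c⁻¹•Q) = c⁻¹•Q ∧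
      ((c•B)*(c⁻¹•Q))ᵀ = (c•B)*(c⁻¹•Q) ∧ ((c⁻¹•Q)*(c•B))ᵀ = (c⁻¹•Q)*(c•B) := by
  refine ⟨?_, ?_, ?_, ?_⟩ <;>
    simp only [Matrix.smul_mul, Matrix.mul_smul, smul_smul, Matrix.transpose_smul,
      hQ1, hQ2, hQ3, hQ4] <;>
    first
    | rfl
    | (congr 1; field_simp)

/-- Variance bound for the minimum-norm estimator: with `E_x[z_x z_xᵀ] = (1/s)WᵀΣW`,
`E[εεᵀ] ⪯ σ²I`, and `(1/n)ZᵀZ = (1/s)WᵀΣ̂W`, the variance term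
`V = E_x E_ε ‖z_xᵀ(ZᵀZ)†Zᵀε‖²` satisfies `V ≤ (σ²/n)·Tr(WᵀΣW (WᵀΣ̂W)†)`,
where pseudoinverses are characterized by the Penrose conditions. -/
theorem stmt_13 {n s p : ℕ} (hn : 0 < n) (hns : n ≤ s)
    {X : Type*} [MeasurableSpace X] (ν : Measure X) [IsProbabilityMeasure ν]
    {Ω : Type*} [MeasurableSpace Ω] (μ : Measure Ω) [IsProbabilityMeasure μ]
    (Z : Matrix (Fin n) (Fin s) ℝ) (W : Matrix (Fin p) (Fin s) ℝ)
    (S Shat : Matrix (Fin p) (Fin p) ℝ)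
    (z : X → Fin s → ℝ) (ε : Ω → Fin n → ℝ) (σ : ℝ)
    (hzint : ∀ i j, Integrable (fun x => z x i * z x j) ν)
    (hz : ∀ i j, (∫ x, z x i * z x j ∂ν) = (((s : ℝ)⁻¹) • (Wᵀ * S * W)) i j)
    (hεint : ∀ i j, Integrable (fun ω => ε ω i * ε ω j) μ)
    (hε : ((σ ^ 2 • (1 : Matrix (Fin n) (Fin n) ℝ)) -
        Matrix.of fun i j => ∫ ω, ε ω i * ε ω j ∂μ).PosSemidef)
    (hShat : ((n : ℝ)⁻¹) • (Zᵀ * Z) = ((s : ℝ)⁻¹) • (Wᵀ * Shat * W))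
    (P : Matrix (Fin s) (Fin s) ℝ)
    (hP1 : Zᵀ * Z * P * (Zᵀ * Z) = Zᵀ * Z) (hP2 : P * (Zᵀ * Z) * P = P)
    (hP3 : (Zᵀ * Z * P)ᵀ = Zᵀ * Z * P) (hP4 : (P * (Zᵀ * Z))ᵀ = P * (Zᵀ * Z))
    (Q : Matrix (Fin s) (Fin s) ℝ)
    (hQ1 : Wᵀ * Shat * W * Q * (Wᵀ * Shat * W) = Wᵀ * Shat * W)
    (hQ2 : Q * (Wᵀ * Shat * W) * Q = Q)
    (hQ3 : (Wᵀ * Shat * W * Q)ᵀ = Wᵀ * Shat * W * Q)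
    (hQ4 : (Q * (Wᵀ * Shat * W))ᵀ = Q * (Wᵀ * Shat * W)) :
    (∫ x, ∫ ω, (z x ⬝ᵥ (P * Zᵀ).mulVec (ε ω)) ^ 2 ∂μ ∂ν) ≤
      (σ ^ 2 / n) * (Wᵀ * S * W * Q).trace := by
  have hn0 : (n:ℝ) ≠ 0 := Nat.cast_ne_zero.mpr hn.ne'
  have hs0 : (s:ℝ) ≠ 0 := Nat.cast_ne_zero.mpr (lt_of_lt_of_le hn hns).ne'
  set E : Matrix (Fin n) (Fin n) ℝ := Matrix.of fun i j => ∫ ω, ε ω i * ε ω j ∂μ with hE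
  set M : Matrix (Fin s) (Fin s) ℝ := ((s : ℝ)⁻¹) • (Wᵀ * S * W) with hM
  set A : Matrix (Fin s) (Fin n) ℝ := P * Zᵀ with hA
  set B : Matrix (Fin s) (Fin s) ℝ := A * E * Aᵀ with hB
  -- symmetry of M (as entries)
  have hMee : ∀ i j, M i j = M j i := by
    intro i j
    rw [← hz i j, ← hz j i]
    exact integral_congr_ae (Filter.Eventually.of_forall fun x => mul_comm _ _)
  have hMsymm : Mᵀ = M := by
    ext i j; rw [Matrix.transpose_apply, hMee]
  -- the inner integral
  have hdot : ∀ x (v : Fin n → ℝ), z x ⬝ᵥ A *ᵥ v = (Aᵀ *ᵥ z x) ⬝ᵥ v := by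
    intro x v
    rw [Matrix.dotProduct_mulVec, Matrix.mulVec_transpose]
  have inner : ∀ x, (∫ ω, (z x ⬝ᵥ A *ᵥ (ε ω))^2 ∂μ) = z x ⬝ᵥ (B *ᵥ z x) := by
    intro x
    have hsq : ∀ v : Fin n → ℝ,
        (z x ⬝ᵥ A *ᵥ v)^2 = ∑ k, ∑ l, ((Aᵀ *ᵥ z x) k * (Aᵀ *ᵥ z x) l) * (v k * v l) := by
      intro v
      rw [hdot, sq, dotProduct, Finset.sum_mul_sum]
      exact Finset.sum_congr rfl fun k _ => Finset.sum_congr rfl fun l _ => by ring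
    calc (∫ ω, (z x ⬝ᵥ A *ᵥ (ε ω))^2 ∂μ)
        = ∫ ω, ∑ k, ∑ l, ((Aᵀ *ᵥ z x) k * (Aᵀ *ᵥ z x) l) * (ε ω k * ε ω l) ∂μ := by
          simp only [hsq]
      _ = ∑ k, ∑ l, ((Aᵀ *ᵥ z x) k * (Aᵀ *ᵥ z x) l) * (E k l) := by
          rw [integral_finset_sum _ (fun k _ =>
            integrable_finset_sum _ (fun l _ => (hεint k l).const_mul _))]
          refine Finset.sum_congr rfl fun k _ => ?_
          rw [integral_finset_sum _ (fun l _ => (hεint k l).const_mul _)]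
          refine Finset.sum_congr rfl fun l _ => ?_
          rw [integral_const_mul]
          rfl
      _ = z x ⬝ᵥ (B *ᵥ z x) := by
          have hBz : B *ᵥ z x = A *ᵥ (E *ᵥ (Aᵀ *ᵥ z x)) := by
            rw [hB, ← Matrix.mulVec_mulVec, ← Matrix.mulVec_mulVec]
          rw [hBz, hdot]
          simp only [dotProduct, Matrix.mulVec]
          refine Finset.sum_congr rfl fun k _ => ?_
          rw [Finset.mul_sum]
          exact Finset.sum_congr rfl fun l _ => by ring
  -- the outer integral
  have hzzB : ∀ x, z x ⬝ᵥ (B *ᵥ z x) = ∑ i, ∑ j, B i j * (z x i * z x j) := by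
    intro x
    simp only [dotProduct, Matrix.mulVec]
    refine Finset.sum_congr rfl fun i _ => ?_
    rw [Finset.mul_sum]
    exact Finset.sum_congr rfl fun j _ => by ring
  have outer : (∫ x, z x ⬝ᵥ (B *ᵥ z x) ∂ν) = ∑ i, ∑ j, B i j * M i j := by
    calc (∫ x, z x ⬝ᵥ (B *ᵥ z x) ∂ν)
        = ∫ x, ∑ i, ∑ j, B i j * (z x i * z x j) ∂ν := by simp only [hzzB]
      _ = ∑ i, ∑ j, B i j * M i j := by
          rw [integral_finset_sum _ (fun i _ =>
            integrable_finset_sum _ (fun j _ => (hzint i j).const_mul (B i j)))]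
          refine Finset.sum_congr rfl fun i _ => ?_
          rw [integral_finset_sum _ (fun j _ => (hzint i j).const_mul (B i j))]
          refine Finset.sum_congr rfl fun j _ => ?_
          rw [integral_const_mul, hz]
  have traceC : ∑ i, ∑ j, B i j * M i j = (M * B).trace := by
    rw [Matrix.trace]
    simp only [Matrix.diag_apply, Matrix.mul_apply]
    rw [Finset.sum_comm]
    exact Finset.sum_congr rfl fun j _ => Finset.sum_congr rfl fun i _ => by
      rw [hMee i j]; ring
  -- positive semidefiniteness of M
  have hMpsd : M.PosSemidef := by
    refine Matrix.PosSemidef.of_dotProduct_mulVec_nonneg ?_ ?_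
    · rw [Matrix.IsHermitian, Matrix.conjTranspose_eq_transpose_of_trivial, hMsymm]
    · intro v
      rw [star_trivial]
      have hvM : v ⬝ᵥ (M *ᵥ v) = ∫ x, (∑ i, v i * z x i)^2 ∂ν := by
        have hexp : ∀ x, (∑ i, v i * z x i)^2 = ∑ i, ∑ j, (v i * v j) * (z x i * z x j) := by
          intro x
          rw [sq, Finset.sum_mul_sum]
          exact Finset.sum_congr rfl fun i _ => Finset.sum_congr rfl fun j _ => by ring
        calc v ⬝ᵥ (M *ᵥ v) = ∑ i, ∑ j, (v i * v j) * M i j := by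
              simp only [dotProduct, Matrix.mulVec]
              refine Finset.sum_congr rfl fun i _ => ?_
              rw [Finset.mul_sum]
              exact Finset.sum_congr rfl fun j _ => by ring
          _ = ∫ x, ∑ i, ∑ j, (v i * v j) * (z x i * z x j) ∂ν := by
              rw [integral_finset_sum _ (fun i _ =>
                integrable_finset_sum _ (fun j _ => (hzint i j).const_mul _))]
              refine Finset.sum_congr rfl fun i _ => ?_
              rw [integral_finset_sum _ (fun j _ => (hzint i j).const_mul _)]
              refine Finset.sum_congr rfl fun j _ => ?_
              rw [integral_const_mul, hz]
          _ = ∫ x, (∑ i, v i * z x i)^2 ∂ν := by simp only [hexp]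
      rw [hvM]
      exact integral_nonneg fun x => sq_nonneg _
  -- PSD of the sandwiched noise matrix
  have h2psd : (A * ((σ ^ 2 • (1 : Matrix (Fin n) (Fin n) ℝ)) - E) * Aᵀ).PosSemidef := by
    have := hε.mul_mul_conjTranspose_same A
    rwa [Matrix.conjTranspose_eq_transpose_of_trivial] at this
  have h0 : 0 ≤ (M * (A * ((σ ^ 2 • (1 : Matrix (Fin n) (Fin n) ℝ)) - E) * Aᵀ)).trace :=
    trace_mul_psd_nonneg hMpsd h2psd
  have hsplit : A * ((σ ^ 2 • (1 : Matrix (Fin n) (Fin n) ℝ)) - E) * Aᵀ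
      = σ ^ 2 • (A * Aᵀ) - B := by
    rw [Matrix.mul_sub, Matrix.sub_mul, hB]
    congr 1
    rw [Matrix.mul_smul, Matrix.mul_one, Matrix.smul_mul]
  have hineq : (M * B).trace ≤ σ ^ 2 * (M * (A * Aᵀ)).trace := by
    rw [hsplit, Matrix.mul_sub, Matrix.trace_sub, Matrix.mul_smul, Matrix.trace_smul,
      smul_eq_mul, sub_nonneg] at h0
    exact h0
  -- symmetry of P
  have hM0symm : (Zᵀ * Z)ᵀ = Zᵀ * Z := by
    rw [Matrix.transpose_mul, Matrix.transpose_transpose]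
  have e1 : (Zᵀ*Z)*Pᵀ = P*(Zᵀ*Z) := by
    calc (Zᵀ*Z)*Pᵀ = (Zᵀ*Z)ᵀ*Pᵀ := by rw [hM0symm]
      _ = (P*(Zᵀ*Z))ᵀ := (Matrix.transpose_mul _ _).symm
      _ = P*(Zᵀ*Z) := hP4
  have e2 : Pᵀ*(Zᵀ*Z) = (Zᵀ*Z)*P := by
    calc Pᵀ*(Zᵀ*Z) = Pᵀ*(Zᵀ*Z)ᵀ := by rw [hM0symm]
      _ = ((Zᵀ*Z)*P)ᵀ := (Matrix.transpose_mul _ _).symm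
      _ = (Zᵀ*Z)*P := hP3
  have t1 : (Zᵀ*Z)*Pᵀ*(Zᵀ*Z) = Zᵀ*Z := by
    have h := congrArg Matrix.transpose hP1
    simpa only [Matrix.transpose_mul, Matrix.transpose_transpose, Matrix.mul_assoc] using h
  have t2 : Pᵀ*(Zᵀ*Z)*Pᵀ = Pᵀ := by
    have h := congrArg Matrix.transpose hP2
    simpa only [Matrix.transpose_mul, Matrix.transpose_transpose, Matrix.mul_assoc] using h
  have t3 : ((Zᵀ*Z)*Pᵀ)ᵀ = (Zᵀ*Z)*Pᵀ := by rw [e1]; exact hP4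
  have t4 : (Pᵀ*(Zᵀ*Z))ᵀ = Pᵀ*(Zᵀ*Z) := by rw [e2]; exact hP3
  have hPsymm : Pᵀ = P := pinv_unique t1 t2 t3 t4 hP1 hP2 hP3 hP4
  have hAAT : A * Aᵀ = P := by
    rw [hA, Matrix.transpose_mul, Matrix.transpose_transpose, hPsymm]
    calc (P*Zᵀ)*(Z*P) = (P*(Zᵀ*Z))*P := by simp only [Matrix.mul_assoc]
      _ = P := hP2
  -- P equals (s/n) • Q
  have hM0 : Zᵀ*Z = ((n:ℝ)/s) • (Wᵀ*Shat*W) := by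
    calc Zᵀ*Z = (n:ℝ) • (((n:ℝ)⁻¹) • (Zᵀ*Z)) := by
          rw [smul_smul, mul_inv_cancel₀ hn0, one_smul]
      _ = (n:ℝ) • (((s:ℝ)⁻¹) • (Wᵀ*Shat*W)) := by rw [hShat]
      _ = ((n:ℝ)/s) • (Wᵀ*Shat*W) := by rw [smul_smul, div_eq_mul_inv]
  have hc : ((n:ℝ)/s) ≠ 0 := div_ne_zero hn0 hs0
  obtain ⟨u1, u2, u3, u4⟩ := pinv_smul (B := Wᵀ*Shat*W) (Q := Q) hc hQ1 hQ2 hQ3 hQ4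
  rw [← hM0] at u1 u2 u3 u4
  have hPQ : P = ((n:ℝ)/s)⁻¹ • Q := pinv_unique hP1 hP2 hP3 hP4 u1 u2 u3 u4
  -- final computation
  have hfinal : σ ^ 2 * (M * (A * Aᵀ)).trace = (σ ^ 2 / n) * (Wᵀ * S * W * Q).trace := by
    rw [hAAT, hPQ, hM, Matrix.smul_mul, Matrix.mul_smul, smul_smul, Matrix.trace_smul,
      smul_eq_mul, inv_div]
    field_simp
  calc (∫ x, ∫ ω, (z x ⬝ᵥ (P * Zᵀ) *ᵥ (ε ω)) ^ 2 ∂μ ∂ν)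
      = ∫ x, z x ⬝ᵥ (B *ᵥ z x) ∂ν := by
        rw [← hA]; simp only [inner]
    _ = ∑ i, ∑ j, B i j * M i j := outer
    _ = (M * B).trace := traceC
    _ ≤ σ ^ 2 * (M * (A * Aᵀ)).trace := hineq
    _ = (σ ^ 2 / n) * (Wᵀ * S * W * Q).trace := hfinal
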